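/- If B is a symmetric d×d real matrix lying in the closed positive k-cone, i.e. σ_1(B) ≥ 0, …, σ_k(B) ≥ 0, then the (k-1)-st Newton tensor T_{k-1}(B) is positive semidefinite. If moreover σ_1(B) > 0, …, σ_k(B) > 0, then T_{k-1}(B) is positive definite. -/

import Mathlib

/-!
Diagonalising `B`, the Newton tensor `T_{k-1}(B)` acts on the eigenvector of `λ_i` by
`∑_j (-1)^j σ_{k-1-j}(λ) λ_i^j = σ_{k-1}(λ | i)`, the elementary symmetric function of the
eigenvalues with `λ_i` removed. So it suffices to show `σ_{k-1}(λ | i) > 0` for `λ` in the open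
cone; the closed cone follows by shifting `λ` by `ε > 0` and letting `ε → 0`.

Up to a positive constant, `s ↦ σ_j(λ + s)` is a derivative of `∏ (X + λ_i)`, hence real-rooted by
Rolle, with coefficients positive multiples of `σ_j(λ), …, σ_0(λ)`. If those are `≥ 0` and
`σ_j(λ) > 0`, all its roots are negative, so all its coefficients are positive: this rules out
`σ_0, …, σ_{j-2} ≥ 0`, `σ_{j-1} = 0`, `σ_j > 0`. Now if `j < k` is least with
`σ_j(λ | i) ≤ 0`, the polynomial `σ_j(λ | i + s)` has a root `s ≥ 0`, and at that shift
`σ_{j+1}(λ | i + s) = σ_{j+1}(λ + s) > 0`, which is the excluded pattern.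
-/

open Finset Matrix

variable {d : ℕ}

/-- `σ_k(B)`: the `k`-th elementary symmetric function of the eigenvalues of a
symmetric (Hermitian) real matrix `B`. -/
noncomputable def sigmaEig {B : Matrix (Fin d) (Fin d) ℝ} (hB : B.IsHermitian) (k : ℕ) : ℝ :=
  (Finset.univ.val.map hB.eigenvalues).esymm k

/-- The `k`-th Newton tensor `T_k(B) = ∑_{j=0}^k (-1)^j σ_{k-j}(B) B^j`. -/
noncomputable def newtonTensor {B : Matrix (Fin d) (Fin d) ℝ} (hB : B.IsHermitian) (k : ℕ) :
    Matrix (Fin d) (Fin d) ℝ :=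
  ∑ j ∈ Finset.range (k + 1), ((-1 : ℝ) ^ j * sigmaEig hB (k - j)) • B ^ j

open Polynomial

namespace Multiset

variable {R : Type*}

lemma esymm_zero [CommSemiring R] (m : Multiset R) : m.esymm 0 = 1 := by
  simp [esymm]

lemma esymm_cons_succ [CommSemiring R] (x : R) (m : Multiset R) (k : ℕ) :
    (x ::ₘ m).esymm (k + 1) = m.esymm (k + 1) + x * m.esymm k := by
  simp only [esymm, powersetCard_cons, map_add, sum_add, map_map, Function.comp_def, prod_cons,
    sum_map_mul_left]

lemma sum_range_neg_one_pow_mul_esymm [CommRing R] [DecidableEq R] {m : Multiset R} {x : R}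
    (hx : x ∈ m) (k : ℕ) :
    ∑ j ∈ Finset.range (k + 1), (-1) ^ j * m.esymm (k - j) * x ^ j = (m.erase x).esymm k := by
  induction k with
  | zero => simp [esymm_zero]
  | succ k ih =>
    have hm := esymm_cons_succ x (m.erase x) k
    rw [cons_erase hx] at hm
    rw [sum_range_succ', Nat.sub_zero, hm, ← ih, Finset.mul_sum]
    have : ∑ j ∈ Finset.range (k + 1), ((-1) ^ (j + 1) * m.esymm (k + 1 - (j + 1)) * x ^ (j + 1)
        + x * ((-1) ^ j * m.esymm (k - j) * x ^ j)) = 0 :=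
      Finset.sum_eq_zero fun j _ => by rw [Nat.add_sub_add_right]; ring
    rw [Finset.sum_add_distrib] at this
    linear_combination this

lemma esymm_eq_zero_of_card_lt [CommSemiring R] {m : Multiset R} {k : ℕ} (h : card m < k) :
    m.esymm k = 0 := by
  simp [esymm, powersetCard_eq_empty _ h]

lemma esymm_pos [CommSemiring R] [PartialOrder R] [IsStrictOrderedRing R] {m : Multiset R}
    (hm : ∀ x ∈ m, 0 < x) {k : ℕ} (hk : k ≤ card m) : 0 < m.esymm k := by
  have hprod : ∀ t ∈ m.powersetCard k, 0 < t.prod := fun t ht =>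
    prod_pos fun a ha => hm a (mem_of_le (mem_powersetCard.mp ht).1 ha)
  obtain ⟨t, ht⟩ : ∃ t, t ∈ m.powersetCard k :=
    exists_mem_of_ne_zero fun h => (Nat.choose_pos hk).ne' (by simpa using congrArg card h)
  obtain ⟨u, hu⟩ := exists_cons_of_mem ht
  rw [esymm, hu, map_cons, sum_cons]
  refine add_pos_of_pos_of_nonneg (hprod t ht) (sum_nonneg fun y hy => ?_)
  obtain ⟨s, hs, rfl⟩ := mem_map.mp hy
  exact (hprod s (hu ▸ mem_cons_of_mem hs)).le

lemma prod_X_add_C_eq_prod_X_sub_C_neg [CommRing R] (m : Multiset R) :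
    (m.map fun r => X + C r).prod = ((m.map Neg.neg).map fun a => X - C a).prod := by
  simp [map_map, sub_eq_add_neg]

lemma natDegree_prod_X_add_C [CommRing R] [Nontrivial R] (m : Multiset R) :
    (m.map fun r => X + C r).prod.natDegree = card m := by
  rw [prod_X_add_C_eq_prod_X_sub_C_neg, natDegree_multiset_prod_X_sub_C_eq_card, card_map]

lemma card_roots_prod_X_add_C [CommRing R] [IsDomain R] (m : Multiset R) :
    (m.map fun r => X + C r).prod.roots.card = (m.map fun r => X + C r).prod.natDegree := by
  rw [natDegree_prod_X_add_C, prod_X_add_C_eq_prod_X_sub_C_neg, roots_multiset_prod_X_sub_C,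
    card_map]

end Multiset

namespace Polynomial

variable {R : Type*}

lemma coeff_pos_of_roots_neg [CommRing R] [LinearOrder R] [IsStrictOrderedRing R] {p : R[X]}
    (hroots : p.roots.card = p.natDegree) (hneg : ∀ a ∈ p.roots, a < 0)
    (hlc : 0 < p.leadingCoeff) {i : ℕ} (hi : i ≤ p.natDegree) : 0 < p.coeff i := by
  rw [coeff_eq_esymm_roots_of_card hroots hi, mul_assoc, ← Multiset.esymm_neg]
  refine mul_pos hlc (Multiset.esymm_pos (fun a ha => ?_) (by simp [hroots]))
  obtain ⟨b, hb, rfl⟩ := Multiset.mem_map.mp ha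
  exact neg_pos.mpr (hneg b hb)

lemma coeff_mul_pow_le_eval [CommSemiring R] [PartialOrder R] [IsOrderedRing R]
    {p : R[X]} (hp : ∀ i, 0 ≤ p.coeff i) {s : R} (hs : 0 ≤ s) (i : ℕ) :
    p.coeff i * s ^ i ≤ p.eval s := by
  rcases le_or_gt i p.natDegree with hi | hi
  · rw [eval_eq_sum_range]
    exact single_le_sum (fun j _ => mul_nonneg (hp j) (pow_nonneg hs j)) (mem_range.mpr (by omega))
  · rw [coeff_eq_zero_of_natDegree_lt hi, zero_mul, eval_eq_sum_range]
    exact sum_nonneg fun j _ => mul_nonneg (hp j) (pow_nonneg hs j)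

lemma card_roots_derivative {p : ℝ[X]} (hp : p.roots.card = p.natDegree) :
    p.derivative.roots.card = p.derivative.natDegree := by
  have := card_roots_le_derivative p
  have := card_roots' (derivative p)
  have := natDegree_derivative_le p
  omega

lemma card_roots_iterate_derivative {p : ℝ[X]} (hp : p.roots.card = p.natDegree) (n : ℕ) :
    (derivative^[n] p).roots.card = (derivative^[n] p).natDegree := by
  induction n with
  | zero => exact hp
  | succ n ih => rw [Function.iterate_succ_apply']; exact card_roots_derivative ih

lemma card_roots_hasseDeriv {p : ℝ[X]} (hp : p.roots.card = p.natDegree) (n : ℕ) :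
    (hasseDeriv n p).roots.card = (hasseDeriv n p).natDegree := by
  have h := card_roots_iterate_derivative hp n
  have hn : (n.factorial : ℝ) ≠ 0 := by positivity
  rw [← factorial_smul_hasseDeriv, LinearMap.smul_apply, ← Nat.cast_smul_eq_nsmul ℝ,
    roots_smul_nonzero _ hn, natDegree_smul _ hn] at h
  exact h

end Polynomial

namespace Multiset

/-- By Taylor's formula this is the polynomial `s ↦ σ_k(m.map (· + s))` (`eval_esymmShift`);
as a multiple of a derivative of `∏ (X + r)` it has only real roots. -/
noncomputable def esymmShift (m : Multiset ℝ) (k : ℕ) : ℝ[X] :=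
  hasseDeriv (card m - k) (m.map fun r => X + C r).prod

variable {m : Multiset ℝ} {k : ℕ}

lemma eval_esymmShift (hk : k ≤ card m) (s : ℝ) :
    (m.esymmShift k).eval s = (m.map (· + s)).esymm k := by
  rw [esymmShift, ← taylor_coeff, taylor_apply, multiset_prod_comp, map_map]
  simp only [Function.comp_def, add_comp, X_comp, C_comp, add_assoc, ← C_add]
  rw [prod_X_add_C_coeff' m (s + ·) (by omega), Nat.sub_sub_self hk]
  simp only [add_comm s]

lemma coeff_esymmShift (hk : k ≤ card m) {i : ℕ} (hi : i ≤ k) :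
    (m.esymmShift k).coeff i = ((i + (card m - k)).choose (card m - k) : ℝ) * m.esymm (k - i) := by
  rw [esymmShift, hasseDeriv_coeff, prod_X_add_C_coeff m (by omega)]
  congr 2
  omega

lemma natDegree_esymmShift (hk : k ≤ card m) : (m.esymmShift k).natDegree = k := by
  rw [esymmShift, natDegree_hasseDeriv, natDegree_prod_X_add_C]
  omega

lemma leadingCoeff_esymmShift_pos (hk : k ≤ card m) : 0 < (m.esymmShift k).leadingCoeff := by
  rw [leadingCoeff, natDegree_esymmShift hk, coeff_esymmShift hk le_rfl, Nat.sub_self]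
  simpa [esymm_zero] using Nat.choose_pos (by omega)

lemma card_roots_esymmShift (k : ℕ) :
    (m.esymmShift k).roots.card = (m.esymmShift k).natDegree :=
  card_roots_hasseDeriv (card_roots_prod_X_add_C m) _

lemma coeff_esymmShift_nonneg (hk : k ≤ card m) (hm : ∀ j ≤ k, 0 ≤ m.esymm j) (i : ℕ) :
    0 ≤ (m.esymmShift k).coeff i := by
  rcases le_or_gt i k with hi | hi
  · rw [coeff_esymmShift hk hi]
    exact mul_nonneg (Nat.cast_nonneg _) (hm _ (Nat.sub_le k i))
  · rw [coeff_eq_zero_of_natDegree_lt (by rwa [natDegree_esymmShift hk])]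

lemma coeff_zero_esymmShift (hk : k ≤ card m) : (m.esymmShift k).coeff 0 = m.esymm k := by
  simp [coeff_zero_eq_eval_zero, eval_esymmShift hk]

lemma esymm_map_add_nonneg (hm : ∀ j ≤ k, 0 ≤ m.esymm j) {s : ℝ} (hs : 0 ≤ s) :
    0 ≤ (m.map (· + s)).esymm k := by
  rcases le_or_gt k (card m) with hk | hk
  · rw [← eval_esymmShift hk]
    refine le_trans ?_ (coeff_mul_pow_le_eval (coeff_esymmShift_nonneg hk hm) hs 0)
    simpa [coeff_zero_esymmShift hk] using hm k le_rfl
  · rw [esymm_eq_zero_of_card_lt (by simpa using hk)]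

lemma esymm_map_add_pos_of_esymm_pos (hm : ∀ j ≤ k, 0 ≤ m.esymm j) (hk : 0 < m.esymm k) {s : ℝ}
    (hs : 0 ≤ s) : 0 < (m.map (· + s)).esymm k := by
  have hkm : k ≤ card m := not_lt.mp fun h => hk.ne' (esymm_eq_zero_of_card_lt h)
  rw [← eval_esymmShift hkm]
  refine lt_of_lt_of_le ?_ (coeff_mul_pow_le_eval (coeff_esymmShift_nonneg hkm hm) hs 0)
  simpa [coeff_zero_esymmShift hkm] using hk

lemma esymm_map_add_pos (hm : ∀ j ≤ k, 0 ≤ m.esymm j) (hk : k ≤ card m) {s : ℝ} (hs : 0 < s) :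
    0 < (m.map (· + s)).esymm k := by
  rw [← eval_esymmShift hk]
  refine lt_of_lt_of_le ?_ (coeff_mul_pow_le_eval (coeff_esymmShift_nonneg hk hm) hs.le k)
  have hlc := leadingCoeff_esymmShift_pos hk
  rw [leadingCoeff, natDegree_esymmShift hk] at hlc
  exact mul_pos hlc (pow_pos hs k)

lemma esymm_pos_of_esymm_succ_pos (hm : ∀ j ≤ k, 0 ≤ m.esymm j) (hk : 0 < m.esymm (k + 1)) :
    0 < m.esymm k := by
  have hkm : k + 1 ≤ card m := not_lt.mp fun h => hk.ne' (esymm_eq_zero_of_card_lt h)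
  have hm' : ∀ j ≤ k + 1, 0 ≤ m.esymm j := fun j hj =>
    (Nat.le_succ_iff.mp hj).elim (hm j) fun h => h ▸ hk.le
  have hroots : ∀ a ∈ (m.esymmShift (k + 1)).roots, a < 0 := fun a ha => not_le.mp fun ha0 => by
    have := coeff_mul_pow_le_eval (coeff_esymmShift_nonneg hkm hm') ha0 0
    rw [coeff_zero_esymmShift hkm, (isRoot_of_mem_roots ha).eq_zero] at this
    linarith
  have h1 := coeff_pos_of_roots_neg (card_roots_esymmShift _) hroots
    (leadingCoeff_esymmShift_pos hkm) (i := 1) (by rw [natDegree_esymmShift hkm]; omega)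
  rw [coeff_esymmShift hkm (by omega)] at h1
  exact pos_of_mul_pos_right h1 (Nat.cast_nonneg _)

lemma esymm_succ_pos_of_cons {x : ℝ} (hm : ∀ j ≤ k, 0 ≤ m.esymm j)
    (hx : ∀ j ≤ k + 2, 0 ≤ (x ::ₘ m).esymm j) (hx' : 0 < (x ::ₘ m).esymm (k + 2)) :
    0 < m.esymm (k + 1) := by
  have hkm : k + 1 ≤ card m := by
    have := not_lt.mp fun h => hx'.ne' (esymm_eq_zero_of_card_lt h)
    simp only [card_cons] at this
    omega
  by_contra! hle
  obtain ⟨s, hs, hs0⟩ : ∃ s ∈ (m.esymmShift (k + 1)).roots, 0 ≤ s := by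
    by_contra! hroots
    have := coeff_pos_of_roots_neg (card_roots_esymmShift _) hroots
      (leadingCoeff_esymmShift_pos hkm) (Nat.zero_le _)
    rw [coeff_zero_esymmShift hkm] at this
    linarith
  have hs' : (m.map (· + s)).esymm (k + 1) = 0 := by
    rw [← eval_esymmShift hkm]; exact (isRoot_of_mem_roots hs).eq_zero
  have hnn : ∀ j ≤ k + 1, 0 ≤ (m.map (· + s)).esymm j := fun j hj =>
    (Nat.le_succ_iff.mp hj).elim
      (fun hj => esymm_map_add_nonneg (fun i hi => hm i (hi.trans hj)) hs0) fun h => h ▸ hs'.ge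
  have hpos : 0 < (m.map (· + s)).esymm (k + 2) := by
    have := esymm_map_add_pos_of_esymm_pos hx hx' hs0
    rwa [map_cons, esymm_cons_succ, hs', mul_zero, add_zero] at this
  exact (esymm_pos_of_esymm_succ_pos hnn hpos).ne' hs'

theorem esymm_erase_pos {x : ℝ} (hx : x ∈ m) (hm : ∀ j ≤ k + 1, 0 < m.esymm j) :
    0 < (m.erase x).esymm k := by
  induction k using Nat.strong_induction_on with
  | _ k ih =>
  rcases k with _ | k
  · simp [esymm_zero]
  · have hμ : ∀ j ≤ k, 0 ≤ (m.erase x).esymm j := fun j hj =>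
      (ih j (by omega) fun i hi => hm i (by omega)).le
    rw [← cons_erase hx] at hm
    exact esymm_succ_pos_of_cons hμ (fun j hj => (hm j hj).le) (hm _ le_rfl)

theorem esymm_erase_nonneg {x : ℝ} (hx : x ∈ m) (hm : ∀ j ≤ k + 1, 0 ≤ m.esymm j) :
    0 ≤ (m.erase x).esymm k := by
  rcases lt_or_ge (card (m.erase x)) k with hk | hk
  · rw [esymm_eq_zero_of_card_lt hk]
  have hcard : card (m.erase x) + 1 = card m := card_erase_add_one hx
  have hpos : ∀ ε > 0, 0 < ((m.erase x).esymmShift k).eval ε := fun ε hε => by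
    rw [eval_esymmShift hk, map_erase _ (add_left_injective ε)]
    exact esymm_erase_pos (mem_map_of_mem _ hx) fun j hj =>
      esymm_map_add_pos (fun i hi => hm i (hi.trans hj)) (by omega) hε
  have hlim := ((m.erase x).esymmShift k).continuous.tendsto 0 |>.mono_left
    (nhdsWithin_le_nhds (s := Set.Ioi 0))
  have := ge_of_tendsto hlim (eventually_nhdsWithin_of_forall fun ε hε => (hpos ε hε).le)
  simpa [eval_esymmShift hk] using this

end Multiset

open scoped MatrixOrder

section NewtonTensor

variable {B : Matrix (Fin d) (Fin d) ℝ} (hB : B.IsHermitian)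

lemma newtonTensor_eq_cfc (k : ℕ) :
    newtonTensor hB k =
      cfc (fun t => ∑ j ∈ Finset.range (k + 1), (-1 : ℝ) ^ j * sigmaEig hB (k - j) * t ^ j) B := by
  have := cfc_polynomial
    (∑ j ∈ Finset.range (k + 1), C ((-1 : ℝ) ^ j * sigmaEig hB (k - j)) * X ^ j) B hB.isSelfAdjoint
  simp only [eval_finsetSum, eval_mul, eval_C, eval_pow, eval_X, map_sum, map_mul, aeval_C,
    map_pow, aeval_X] at this
  rw [this, newtonTensor]
  simp only [Algebra.smul_def, map_mul, map_pow]

lemma mem_eigenvalues_of_mem_spectrum {t : ℝ} (ht : t ∈ spectrum ℝ B) :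
    t ∈ univ.val.map hB.eigenvalues := by
  obtain ⟨i, rfl⟩ := hB.spectrum_real_eq_range_eigenvalues ▸ ht
  exact Multiset.mem_map_of_mem _ (mem_univ i)

theorem newtonTensor_eq_cfc_esymm_erase (k : ℕ) :
    newtonTensor hB k = cfc (fun t => ((univ.val.map hB.eigenvalues).erase t).esymm k) B := by
  rw [newtonTensor_eq_cfc, cfc_congr]
  exact fun t ht =>
    Multiset.sum_range_neg_one_pow_mul_esymm (mem_eigenvalues_of_mem_spectrum hB ht) k

end NewtonTensor

/-- If `B` lies in the closed positive `k`-cone then `T_{k-1}(B)` is positive semidefinite;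
if `B` lies in the (open) positive `k`-cone then `T_{k-1}(B)` is positive definite. -/
theorem newtonTensor_posSemidef_posDef {B : Matrix (Fin d) (Fin d) ℝ}
    (hB : B.IsHermitian) (k : ℕ) (hk : 1 ≤ k) :
    ((∀ j, 1 ≤ j → j ≤ k → 0 ≤ sigmaEig hB j) → (newtonTensor hB (k - 1)).PosSemidef) ∧
    ((∀ j, 1 ≤ j → j ≤ k → 0 < sigmaEig hB j) → (newtonTensor hB (k - 1)).PosDef) := by
  obtain ⟨k, rfl⟩ := Nat.exists_eq_add_of_le' hk
  have hcone {P : ℝ → Prop} (h0 : P 1) (h : ∀ j, 1 ≤ j → j ≤ k + 1 → P (sigmaEig hB j)) :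
      ∀ j ≤ k + 1, P ((univ.val.map hB.eigenvalues).esymm j)
    | 0, _ => by rwa [Multiset.esymm_zero]
    | j + 1, hj => h _ (Nat.le_add_left 1 j) hj
  rw [Nat.add_sub_cancel, newtonTensor_eq_cfc_esymm_erase]
  refine ⟨fun h => nonneg_iff_posSemidef.mp (cfc_nonneg fun t ht => ?_),
    fun h => isStrictlyPositive_iff_posDef.mp ((cfc_isStrictlyPositive_iff _ _
      (B.finite_real_spectrum.continuousOn _)).mpr fun t ht => ?_)⟩
  · exact Multiset.esymm_erase_nonneg (mem_eigenvalues_of_mem_spectrum hB ht) (hcone zero_le_one h)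
  · exact Multiset.esymm_erase_pos (mem_eigenvalues_of_mem_spectrum hB ht) (hcone one_pos h)
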